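/- arXiv:0707.0102 — 2 statements merged into one kernel-verified Lean document; each statement's English description precedes it below -/
import Mathlib

section
/- Let (X,d) be a metric space, x₁,…,x_N ∈ X, (πᵢ) a probability vector, and A a π-reversible row-stochastic matrix. Define ℰ(l) := Σ_{i,j} πᵢ a^{(l)}_{ij} d(xᵢ,xⱼ)². Then for all l,m ∈ ℕ, √ℰ(l+m) ≤ √ℰ(l) + √ℰ(m). -/
/-!
Run the chain for `l + m` steps as `l` steps followed by `m` steps, so that `ℰ(l + m)` is an
average of `d(xᵢ, xⱼ)²` over paths `i → k → j`. The triangle inequality through the midpoint `k`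
and Minkowski's inequality in the weighted `L²` space of such paths bound `√ℰ(l + m)` by the `L²`
norms of `d(xᵢ, xₖ)` and of `d(xₖ, xⱼ)`. Because `π` is stationary, the path weights have marginal
`πᵢ a⁽ˡ⁾ᵢₖ` on the first step and `πₖ a⁽ᵐ⁾ₖⱼ` on the second, so these norms are `√ℰ(l)` and `√ℰ(m)`.
-/

open Finset Matrix

theorem Real.sqrt_sum_mul_add_sq_le {ι : Type*} (s : Finset ι) {w : ι → ℝ}
    (hw : ∀ i ∈ s, 0 ≤ w i) (a b : ι → ℝ) :
    √(∑ i ∈ s, w i * (a i + b i) ^ 2) ≤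
      √(∑ i ∈ s, w i * a i ^ 2) + √(∑ i ∈ s, w i * b i ^ 2) := by
  set Sa := ∑ i ∈ s, w i * a i ^ 2
  set Sb := ∑ i ∈ s, w i * b i ^ 2
  have hSa : 0 ≤ Sa := sum_nonneg fun i hi => mul_nonneg (hw i hi) (sq_nonneg _)
  have hSb : 0 ≤ Sb := sum_nonneg fun i hi => mul_nonneg (hw i hi) (sq_nonneg _)
  have cauchy_schwarz : (∑ i ∈ s, w i * (a i * b i)) ^ 2 ≤ Sa * Sb :=
    sum_sq_le_sum_mul_sum_of_sq_le_mul s (fun i hi => mul_nonneg (hw i hi) (sq_nonneg _))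
      (fun i hi => mul_nonneg (hw i hi) (sq_nonneg _)) fun i _ => (by ring : _ = _).le
  have cross : ∑ i ∈ s, w i * (a i * b i) ≤ √Sa * √Sb := by
    rw [← Real.sqrt_mul hSa]
    exact (le_abs_self _).trans (Real.abs_le_sqrt cauchy_schwarz)
  have expand : ∑ i ∈ s, w i * (a i + b i) ^ 2 = Sa + 2 * ∑ i ∈ s, w i * (a i * b i) + Sb := by
    rw [mul_sum, ← sum_add_distrib, ← sum_add_distrib]
    exact sum_congr rfl fun i _ => by ring
  rw [Real.sqrt_le_iff]
  refine ⟨by positivity, ?_⟩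
  rw [expand, add_sq, Real.sq_sqrt hSa, Real.sq_sqrt hSb]
  linarith

namespace Matrix

variable {n R : Type*} [Fintype n] [CommSemiring R] {p : n → R} {A : Matrix n n R}

theorem vecMul_eq_self_of_reversible (hrow : ∀ i, ∑ j, A i j = 1)
    (hrev : ∀ i j, p i * A i j = p j * A j i) : p ᵥ* A = p := by
  funext j
  simp only [vecMul, dotProduct]
  rw [sum_congr rfl fun i _ => hrev i j, ← mul_sum, hrow, mul_one]

theorem vecMul_pow_eq_self [DecidableEq n] (h : p ᵥ* A = p) (k : ℕ) : p ᵥ* A ^ k = p := by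
  induction k with
  | zero => exact vecMul_one p
  | succ k ih => rw [pow_succ, ← vecMul_vecMul, ih, h]

end Matrix

section MarkovEnergy

variable {ι X : Type*} [Fintype ι] [PseudoMetricSpace X]

/-- The paper's `ℰ(l)` is `markovEnergy x π (A ^ l)`. -/
noncomputable def markovEnergy (x : ι → X) (p : ι → ℝ) (P : Matrix ι ι ℝ) : ℝ :=
  ∑ i, ∑ j, p i * P i j * dist (x i) (x j) ^ 2

variable (x : ι → X) {p : ι → ℝ} {B C : Matrix ι ι ℝ}

def pathWeight (p : ι → ℝ) (B C : Matrix ι ι ℝ) (t : ι × ι × ι) : ℝ :=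
  p t.1 * B t.1 t.2.1 * C t.2.1 t.2.2

theorem markovEnergy_mul :
    markovEnergy x p (B * C) =
      ∑ t : ι × ι × ι, pathWeight p B C t * dist (x t.1) (x t.2.2) ^ 2 := by
  simp only [markovEnergy, pathWeight, Fintype.sum_prod_type, mul_apply, mul_sum, sum_mul]
  exact sum_congr rfl fun i _ => sum_comm.trans <| sum_congr rfl fun k _ =>
    sum_congr rfl fun j _ => by ring

theorem sum_pathWeight_mul_dist_first_sq (hC : ∀ k, ∑ j, C k j = 1) :
    ∑ t : ι × ι × ι, pathWeight p B C t * dist (x t.1) (x t.2.1) ^ 2 = markovEnergy x p B := by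
  simp only [markovEnergy, pathWeight, Fintype.sum_prod_type]
  refine sum_congr rfl fun i _ => sum_congr rfl fun k _ => ?_
  rw [← sum_mul, ← mul_sum, hC, mul_one]

theorem sum_pathWeight_mul_dist_second_sq (hB : p ᵥ* B = p) :
    ∑ t : ι × ι × ι, pathWeight p B C t * dist (x t.2.1) (x t.2.2) ^ 2 = markovEnergy x p C := by
  simp only [markovEnergy, pathWeight, Fintype.sum_prod_type]
  rw [sum_comm]
  refine sum_congr rfl fun k _ => ?_
  rw [sum_comm, ← congrFun hB k]
  refine sum_congr rfl fun j _ => ?_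
  simp only [vecMul, dotProduct, sum_mul]

theorem sqrt_markovEnergy_mul_le (hp : ∀ i, 0 ≤ p i) (hB0 : ∀ i j, 0 ≤ B i j)
    (hB : p ᵥ* B = p) (hC0 : ∀ i j, 0 ≤ C i j) (hC : ∀ k, ∑ j, C k j = 1) :
    √(markovEnergy x p (B * C)) ≤ √(markovEnergy x p B) + √(markovEnergy x p C) := by
  have hw : ∀ t ∈ univ, 0 ≤ pathWeight p B C t := fun t _ =>
    mul_nonneg (mul_nonneg (hp _) (hB0 _ _)) (hC0 _ _)
  have triangle : markovEnergy x p (B * C) ≤ ∑ t : ι × ι × ι,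
      pathWeight p B C t * (dist (x t.1) (x t.2.1) + dist (x t.2.1) (x t.2.2)) ^ 2 := by
    rw [markovEnergy_mul]
    gcongr with t ht
    · exact hw t ht
    · exact dist_triangle _ _ _
  calc √(markovEnergy x p (B * C))
      ≤ √(∑ t : ι × ι × ι,
          pathWeight p B C t * (dist (x t.1) (x t.2.1) + dist (x t.2.1) (x t.2.2)) ^ 2) :=
        Real.sqrt_le_sqrt triangle
    _ ≤ _ := Real.sqrt_sum_mul_add_sq_le _ hw _ _
    _ = √(markovEnergy x p B) + √(markovEnergy x p C) := by
        rw [sum_pathWeight_mul_dist_first_sq x hC, sum_pathWeight_mul_dist_second_sq x hB]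

end MarkovEnergy

theorem stmt3_general {X : Type*} [MetricSpace X]
    (N : ℕ) (x : Fin N → X) (p : Fin N → ℝ) (A : Matrix (Fin N) (Fin N) ℝ)
    (hp0 : ∀ i, 0 ≤ p i)
    (hA0 : ∀ i j, 0 ≤ A i j)
    (hrow : ∀ i, ∑ j, A i j = 1)
    (hrev : ∀ i j, p i * A i j = p j * A j i) :
    ∀ l m : ℕ,
      Real.sqrt (∑ i, ∑ j, p i * (A ^ (l + m)) i j * dist (x i) (x j) ^ 2) ≤
        Real.sqrt (∑ i, ∑ j, p i * (A ^ l) i j * dist (x i) (x j) ^ 2) +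
          Real.sqrt (∑ i, ∑ j, p i * (A ^ m) i j * dist (x i) (x j) ^ 2) := by
  intro l m
  have hA : A ∈ rowStochastic ℝ (Fin N) := mem_rowStochastic_iff_sum.2 ⟨hA0, hrow⟩
  have hstat : p ᵥ* A = p := vecMul_eq_self_of_reversible hrow hrev
  have hAm := mem_rowStochastic_iff_sum.1 (pow_mem hA m)
  rw [pow_add]
  exact sqrt_markovEnergy_mul_le x hp0 (fun i j => nonneg_of_mem_rowStochastic (pow_mem hA l))
    (vecMul_pow_eq_self hstat l) hAm.1 hAm.2

/-- Subadditivity of the square root of the Markov-chain energy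
`ℰ(l) = ∑ᵢⱼ πᵢ a⁽ˡ⁾ᵢⱼ d(xᵢ,xⱼ)²` for a reversible chain in any metric space. -/
theorem stmt3 {X : Type*} [MetricSpace X]
    (N : ℕ) (x : Fin N → X) (p : Fin N → ℝ) (A : Matrix (Fin N) (Fin N) ℝ)
    (hp0 : ∀ i, 0 ≤ p i) (hp1 : ∀ i, p i ≤ 1) (hpsum : ∑ i, p i = 1)
    (hA0 : ∀ i j, 0 ≤ A i j) (hA1 : ∀ i j, A i j ≤ 1)
    (hrow : ∀ i, ∑ j, A i j = 1)
    (hrev : ∀ i j, p i * A i j = p j * A j i) :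
    ∀ l m : ℕ,
      Real.sqrt (∑ i, ∑ j, p i * (A ^ (l + m)) i j * dist (x i) (x j) ^ 2) ≤
        Real.sqrt (∑ i, ∑ j, p i * (A ^ l) i j * dist (x i) (x j) ^ 2) +
          Real.sqrt (∑ i, ∑ j, p i * (A ^ m) i j * dist (x i) (x j) ^ 2) :=
  stmt3_general N x p A hp0 hA0 hrow hrev
end

section
/- Every metric space satisfying the Ptolemy inequality has Enflo type 2 with constant √3: for every N and points (x_ε) indexed by ε ∈ {−1,1}^N, Σ_ε d(x_ε, x_{−ε})² ≤ 3 Σ_{ε∼ε'} d(x_ε, x_{ε'})². -/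
/-!
Ptolemy's inequality for the quadrilateral `w x y z`, together with
`|d(w,y) - d(x,z)| ≤ d(x,y) + d(z,w)`, gives the four-point inequality
`d(w,y)² + d(x,z)² ≤ d(w,x)² + d(y,z)² + 3 (d(x,y)² + d(z,w)²)`.
Enflo type `√3` follows by induction on the dimension: split `{-1,1}^(N+1)` into the facets
`ε₀ = ∓1` (images `f`, `t` of `{-1,1}^N`), apply the four-point inequality to every
quadrilateral `f ε, f (-ε), t (-ε), t ε`, and the induction hypothesis to `f` and `t`.
-/

open Finset

/-- Two vertices of the discrete cube `{−1,1}^N` (modelled as `Fin N → Bool`) are adjacent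
if they differ in exactly one coordinate. -/
def Adjacent {N : ℕ} (ε ε' : Fin N → Bool) : Prop :=
  (Finset.univ.filter fun i => ε i ≠ ε' i).card = 1

instance {N : ℕ} (ε ε' : Fin N → Bool) : Decidable (Adjacent ε ε') := by
  unfold Adjacent; infer_instance

open Function

theorem dist_sq_add_dist_sq_le_of_ptolemy {X : Type*} [PseudoMetricSpace X] {w x y z : X}
    (h : dist w y * dist x z ≤ dist w x * dist y z + dist w z * dist y x) :
    dist w y ^ 2 + dist x z ^ 2 ≤
      dist w x ^ 2 + dist y z ^ 2 + 3 * (dist x y ^ 2 + dist z w ^ 2) := by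
  have hdiff : |dist w y - dist x z| ≤ dist x y + dist z w := by
    rw [abs_sub_le_iff]
    constructor
    · linarith [dist_triangle4 w z x y, dist_comm w z, dist_comm z x]
    · linarith [dist_triangle4 x y w z, dist_comm y w, dist_comm w z]
  have hsq : (dist w y - dist x z) ^ 2 ≤ (dist x y + dist z w) ^ 2 :=
    sq_le_sq' (abs_le.mp hdiff).1 (abs_le.mp hdiff).2
  rw [dist_comm w z, dist_comm y x] at h
  nlinarith [sq_nonneg (dist w x - dist y z), sq_nonneg (dist x y - dist z w)]

theorem Fintype.sum_pi_fin_succ {M : Type*} [AddCommMonoid M] {N : ℕ} {α : Type*} [Fintype α]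
    (f : (Fin (N + 1) → α) → M) :
    ∑ ε, f ε = ∑ a, ∑ ε, f (Fin.cons a ε) := by
  rw [← Fintype.sum_prod_type']
  exact (Fintype.sum_equiv (Fin.consEquiv fun _ => α) _ _ fun _ => rfl).symm

theorem Fintype.sum_comp_not {M : Type*} [AddCommMonoid M] {N : ℕ} (g : (Fin N → Bool) → M) :
    ∑ ε : Fin N → Bool, g (fun i => !ε i) = ∑ ε, g ε :=
  Equiv.sum_comp
    (Involutive.toPerm (fun (ε : Fin N → Bool) i => !ε i) fun ε => funext fun i => (ε i).not_not) g

section EnfloType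

variable {X : Type*} [PseudoMetricSpace X] {N : ℕ}

def diagonalSum (x : (Fin N → Bool) → X) : ℝ :=
  ∑ ε, dist (x ε) (x fun i => !ε i) ^ 2

def edgeSum (x : (Fin N → Bool) → X) : ℝ :=
  ∑ ε, ∑ i, dist (x ε) (x (update ε i (!ε i))) ^ 2

theorem diagonalSum_of_isEmpty (x : (Fin 0 → Bool) → X) : diagonalSum x = 0 := by
  refine sum_eq_zero fun ε _ => ?_
  simp [Subsingleton.elim (fun i => !ε i) ε]

theorem diagonalSum_succ (x : (Fin (N + 1) → Bool) → X) :
    diagonalSum x = ∑ ε, (dist (x (Fin.cons false ε)) (x (Fin.cons true fun i => !ε i)) ^ 2 +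
      dist (x (Fin.cons true ε)) (x (Fin.cons false fun i => !ε i)) ^ 2) := by
  have hnot (b : Bool) (ε : Fin N → Bool) :
      (fun i => !(Fin.cons b ε : Fin (N + 1) → Bool) i) = Fin.cons (!b) fun i => !ε i := by
    ext i; cases i using Fin.cases <;> simp
  simp only [diagonalSum, Fintype.sum_pi_fin_succ, hnot, Fintype.sum_bool, Bool.not_true,
    Bool.not_false, ← sum_add_distrib]
  exact sum_congr rfl fun _ _ => add_comm _ _

theorem edgeSum_succ (x : (Fin (N + 1) → Bool) → X) :
    edgeSum x =
      edgeSum (fun ε => x (Fin.cons false ε)) + edgeSum (fun ε => x (Fin.cons true ε)) +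
        2 * ∑ ε, dist (x (Fin.cons false ε)) (x (Fin.cons true ε)) ^ 2 := by
  simp only [edgeSum, Fintype.sum_pi_fin_succ, Fin.sum_univ_succ, Fin.cons_zero,
    Fin.update_cons_zero, Fin.cons_succ, ← Fin.cons_update, Fintype.sum_bool, sum_add_distrib,
    Bool.not_true, Bool.not_false]
  simp_rw [dist_comm (x (Fin.cons true _)) (x (Fin.cons false _))]
  ring

theorem diagonalSum_le_mul_edgeSum {C : ℝ}
    (hC : ∀ w x y z : X, dist w y ^ 2 + dist x z ^ 2 ≤
      dist w x ^ 2 + dist y z ^ 2 + C * (dist x y ^ 2 + dist z w ^ 2))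
    (x : (Fin N → Bool) → X) : diagonalSum x ≤ C * edgeSum x := by
  induction N with
  | zero => simp [diagonalSum_of_isEmpty, edgeSum]
  | succ N ih =>
    set f : (Fin N → Bool) → X := fun ε => x (Fin.cons false ε)
    set t : (Fin N → Bool) → X := fun ε => x (Fin.cons true ε)
    calc diagonalSum x
        ≤ ∑ ε, (dist (f ε) (f fun i => !ε i) ^ 2 + dist (t ε) (t fun i => !ε i) ^ 2 +
            C * (dist (f fun i => !ε i) (t fun i => !ε i) ^ 2 + dist (f ε) (t ε) ^ 2)) := by
          rw [diagonalSum_succ]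
          refine sum_le_sum fun ε _ => ?_
          have := hC (f ε) (f fun i => !ε i) (t fun i => !ε i) (t ε)
          rwa [dist_comm (t _) (t ε), dist_comm (t ε) (f ε), ← dist_comm (t ε)] at this
      _ = diagonalSum f + diagonalSum t + C * (2 * ∑ ε, dist (f ε) (t ε) ^ 2) := by
          simp only [diagonalSum, sum_add_distrib, ← mul_sum,
            Fintype.sum_comp_not fun ε => dist (f ε) (t ε) ^ 2]
          ring
      _ ≤ C * edgeSum f + C * edgeSum t + C * (2 * ∑ ε, dist (f ε) (t ε) ^ 2) := by
          gcongr
          exacts [ih f, ih t]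
      _ = C * edgeSum x := by rw [edgeSum_succ]; ring

end EnfloType

theorem adjacent_iff {N : ℕ} {ε ε' : Fin N → Bool} :
    Adjacent ε ε' ↔ ∃ i, ε' = update ε i (!ε i) := by
  simp only [Adjacent, card_eq_one, eq_singleton_iff_unique_mem, mem_filter, mem_univ, true_and,
    funext_iff, update_apply]
  refine exists_congr fun i => ?_
  constructor
  · rintro ⟨hi, hk⟩ k
    split_ifs with h
    · subst h; revert hi; cases ε k <;> cases ε' k <;> simp
    · by_contra hne; exact h (hk k fun e => hne e.symm)
  · intro h
    refine ⟨?_, fun k hk => ?_⟩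
    · rw [h i, if_pos rfl]; cases ε i <;> simp
    · by_contra hne; rw [h k, if_neg hne] at hk; exact hk rfl

theorem injective_update_not {N : ℕ} (ε : Fin N → Bool) :
    Injective fun i => update ε i (!ε i) := by
  intro i j h
  by_contra hij
  simpa [update_of_ne hij] using congrFun h i

theorem sum_ite_adjacent {M : Type*} [AddCommMonoid M] {N : ℕ} (ε : Fin N → Bool)
    (g : (Fin N → Bool) → M) :
    ∑ ε', (if Adjacent ε ε' then g ε' else 0) = ∑ i, g (update ε i (!ε i)) := by
  rw [← sum_filter, ← sum_image (injective_update_not ε).injOn]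
  congr
  ext ε'
  simp [adjacent_iff, eq_comm]

/-- Every Ptolemaic metric space has Enflo type 2 with constant `√3`. -/
theorem stmt12 {X : Type*} [MetricSpace X]
    (hpt : ∀ w x y z : X,
      dist w y * dist x z ≤ dist w x * dist y z + dist w z * dist y x)
    (N : ℕ) (x : (Fin N → Bool) → X) :
    ∑ ε : Fin N → Bool, dist (x ε) (x (fun i => !(ε i))) ^ 2 ≤
      3 * ∑ ε : Fin N → Bool, ∑ ε' : Fin N → Bool,
        if Adjacent ε ε' then dist (x ε) (x ε') ^ 2 else 0 := by
  simpa only [diagonalSum, edgeSum, sum_ite_adjacent] using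
    diagonalSum_le_mul_edgeSum (fun w x y z => dist_sq_add_dist_sq_le_of_ptolemy (hpt w x y z)) x
end
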